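/- arXiv:2305.09508 — 4 statements merged into one kernel-verified Lean document; each statement's English description precedes it below -/
import Mathlib

section
/- Let σ be a finite type, let ℓ : ℕ, and let p : Fin ℓ → MvPolynomial σ ℝ be a family of multivariate real polynomials each of total degree at most 2. Set q := ∑ i, (p i)^2. Then q has total degree at most 4, and for every point x : σ → ℝ one has eval x q = 0 if and only if eval x (p i) = 0 for every i; in particular, q has a real root if and only if the family (p i) has a common real root. -/
open MvPolynomial

theorem quad_sum_of_squares (σ : Type*) [Fintype σ] (ℓ : ℕ)
    (p : Fin ℓ → MvPolynomial σ ℝ) (hp : ∀ i, (p i).totalDegree ≤ 2)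
    (q : MvPolynomial σ ℝ) (hq : q = ∑ i, (p i) ^ 2) :
    q.totalDegree ≤ 4 ∧
      (∀ x : σ → ℝ, eval x q = 0 ↔ ∀ i, eval x (p i) = 0) ∧
      ((∃ x : σ → ℝ, eval x q = 0) ↔ ∃ x : σ → ℝ, ∀ i, eval x (p i) = 0) := by
  subst hq
  have hdeg : (∑ i, (p i) ^ 2).totalDegree ≤ 4 := by
    refine le_trans (totalDegree_finset_sum _ _) ?_
    refine Finset.sup_le fun i _ => ?_
    calc ((p i) ^ 2).totalDegree ≤ 2 * (p i).totalDegree := totalDegree_pow _ _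
      _ ≤ 2 * 2 := by exact Nat.mul_le_mul_left 2 (hp i)
      _ = 4 := rfl
  have hiff : ∀ x : σ → ℝ, eval x (∑ i, (p i) ^ 2) = 0 ↔ ∀ i, eval x (p i) = 0 := by
    intro x
    rw [map_sum]
    simp only [map_pow]
    rw [Finset.sum_eq_zero_iff_of_nonneg (fun i _ => sq_nonneg _)]
    simp [pow_eq_zero_iff]
  exact ⟨hdeg, hiff, exists_congr hiff⟩
end

section
/- Let N : ℕ and let y : List Bool → ℝ satisfy y z = y (z ++ [false]) * y (z ++ [true]) for every list z : List Bool with z.length < N. Then y [] = ∏_{e : Fin N → Bool} y (List.ofFn e), the product ranging over all 2^N Boolean vectors of length N. -/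
theorem tseitin_product (N : ℕ) (y : List Bool → ℝ)
    (h : ∀ z : List Bool, z.length < N → y z = y (z ++ [false]) * y (z ++ [true])) :
    y [] = ∏ e : Fin N → Bool, y (List.ofFn e) := by
  suffices H : ∀ n (z : List Bool), z.length + n ≤ N →
      y z = ∏ e : Fin n → Bool, y (z ++ List.ofFn e) by
    simpa using H N [] (by simp)
  intro n
  induction n with
  | zero => intro z _; simp
  | succ n ih =>
    intro z hz
    rw [h z (by omega)]
    rw [ih (z ++ [false]) (by simp; omega), ih (z ++ [true]) (by simp; omega)]
    rw [← Fintype.prod_equiv (Fin.consEquiv fun _ : Fin (n+1) => Bool) _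
      (fun e => y (z ++ List.ofFn e)) (fun p => rfl)]
    rw [Fintype.prod_prod_type, Fintype.prod_bool]
    simp [List.ofFn_succ, Fin.cons, mul_comm]
end

section
/- Let I be a type, E₁ : Set I, E₊ : Set (I × I × I), E× : Set (I × I × I), let ε : ℝ with ε > 0, and let η, η'' : I → ℝ satisfy: η i = ε for all i ∈ E₁; η i + η j = η k for all (i,j,k) ∈ E₊; and η i * η j = η'' k together with ε * η k = η'' k for all (i,j,k) ∈ E×. Then the assignment ξ defined by ξ i := η i / ε satisfies ξ i = 1 for all i ∈ E₁, ξ i + ξ j = ξ k for all (i,j,k) ∈ E₊, and ξ i * ξ j = ξ k for all (i,j,k) ∈ E×. -/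
/-! Linear constraints are homogeneous, so they survive division by `ε`. The auxiliary value
`η'' k` only mediates the product: the two multiplicative constraints combine to
`η i * η j = ε * η k`, the equation `x i * x j = x k` homogenized by `ε`. -/

theorem div_mul_div_eq_div_of_mul_eq_mul {K : Type*} [Field K] {a b c d : K} (hc : c ≠ 0)
    (h : a * b = c * d) : a / c * (b / c) = d / c := by
  rw [div_mul_div_comm, h, mul_div_mul_left d c hc]

theorem scaling_backward (I : Type*) (E₁ : Set I) (Eadd Emul : Set (I × I × I))
    (ε : ℝ) (hε : 0 < ε) (η η'' : I → ℝ)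
    (hone : ∀ i ∈ E₁, η i = ε)
    (hadd : ∀ t ∈ Eadd, η t.1 + η t.2.1 = η t.2.2)
    (hmul : ∀ t ∈ Emul, η t.1 * η t.2.1 = η'' t.2.2 ∧ ε * η t.2.2 = η'' t.2.2)
    (ξ : I → ℝ) (hξ : ∀ i, ξ i = η i / ε) :
    (∀ i ∈ E₁, ξ i = 1) ∧
      (∀ t ∈ Eadd, ξ t.1 + ξ t.2.1 = ξ t.2.2) ∧
      (∀ t ∈ Emul, ξ t.1 * ξ t.2.1 = ξ t.2.2) := by
  have hε₀ : ε ≠ 0 := hε.ne'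
  refine ⟨fun i hi => ?_, fun t ht => ?_, fun t ht => ?_⟩
  · rw [hξ, hone i hi, div_self hε₀]
  · rw [hξ, hξ, hξ, ← add_div, hadd t ht]
  · obtain ⟨hprod, hscale⟩ := hmul t ht
    rw [hξ, hξ, hξ]
    exact div_mul_div_eq_div_of_mul_eq_mul hε₀ (hprod.trans hscale.symm)
end

section
/- Let I be a type, E₁ : Set I, E₊ : Set (I × I × I), E× : Set (I × I × I), and let B : ℝ with B ≥ 1. Suppose that whenever some assignment satisfies the system (ξ i = 1 on E₁, ξ i + ξ j = ξ k on E₊, ξ i * ξ j = ξ k on E×), there is a satisfying assignment ξ with |ξ i| ≤ B for all i. Let ε : ℝ with 0 < ε ≤ 1/(8B). Then the system has a satisfying assignment if and only if there exist η, η'' : I → ℝ with |η i| ≤ 1/8 and |η'' i| ≤ 1/8 for all i, such that η i = ε for all i ∈ E₁, η i + η j = η k for all (i,j,k) ∈ E₊, and η i * η j = η'' k together with ε * η k = η'' k for all (i,j,k) ∈ E×. -/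
theorem scaling_equivalence (I : Type*) (E₁ : Set I) (Eadd Emul : Set (I × I × I))
    (B : ℝ) (hB : 1 ≤ B)
    (hbound :
      (∃ ξ : I → ℝ, (∀ i ∈ E₁, ξ i = 1) ∧
          (∀ t ∈ Eadd, ξ t.1 + ξ t.2.1 = ξ t.2.2) ∧
          (∀ t ∈ Emul, ξ t.1 * ξ t.2.1 = ξ t.2.2)) →
        ∃ ξ : I → ℝ, ((∀ i ∈ E₁, ξ i = 1) ∧
          (∀ t ∈ Eadd, ξ t.1 + ξ t.2.1 = ξ t.2.2) ∧
          (∀ t ∈ Emul, ξ t.1 * ξ t.2.1 = ξ t.2.2)) ∧ ∀ i, |ξ i| ≤ B)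
    (ε : ℝ) (hε0 : 0 < ε) (hε : ε ≤ 1 / (8 * B)) :
    (∃ ξ : I → ℝ, (∀ i ∈ E₁, ξ i = 1) ∧
        (∀ t ∈ Eadd, ξ t.1 + ξ t.2.1 = ξ t.2.2) ∧
        (∀ t ∈ Emul, ξ t.1 * ξ t.2.1 = ξ t.2.2)) ↔
      ∃ η η'' : I → ℝ,
        (∀ i, |η i| ≤ 1 / 8) ∧ (∀ i, |η'' i| ≤ 1 / 8) ∧
        (∀ i ∈ E₁, η i = ε) ∧
        (∀ t ∈ Eadd, η t.1 + η t.2.1 = η t.2.2) ∧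
        (∀ t ∈ Emul, η t.1 * η t.2.1 = η'' t.2.2 ∧ ε * η t.2.2 = η'' t.2.2) := by
  have hB0 : (0:ℝ) < B := lt_of_lt_of_le one_pos hB
  have hεB : ε * B ≤ 1 / 8 := by
    have : (1 / (8 * B)) * B = 1/8 := by field_simp
    nlinarith
  constructor
  · intro h
    obtain ⟨ξ, ⟨h1, hadd, hmul⟩, hb⟩ := hbound h
    refine ⟨fun i => ε * ξ i, fun i => ε * (ε * ξ i), ?_, ?_, ?_, ?_, ?_⟩
    · intro i
      calc |ε * ξ i| = ε * |ξ i| := by rw [abs_mul, abs_of_pos hε0]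
      _ ≤ ε * B := by nlinarith [hb i, abs_nonneg (ξ i)]
      _ ≤ 1/8 := hεB
    · intro i
      have h1 : |ε * ξ i| ≤ 1/8 := by
        calc |ε * ξ i| = ε * |ξ i| := by rw [abs_mul, abs_of_pos hε0]
        _ ≤ ε * B := by nlinarith [hb i, abs_nonneg (ξ i)]
        _ ≤ 1/8 := hεB
      calc |ε * (ε * ξ i)| = ε * |ε * ξ i| := by rw [abs_mul, abs_of_pos hε0]
      _ ≤ 1 * (1/8) := by
          apply mul_le_mul _ h1 (abs_nonneg _) zero_le_one
          nlinarith
      _ = 1/8 := by norm_num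
    · intro i hi; show ε * ξ i = ε; rw [h1 i hi]; ring
    · intro t ht; show ε * ξ t.1 + ε * ξ t.2.1 = ε * ξ t.2.2
      have := hadd t ht; nlinarith
    · intro t ht
      have := hmul t ht
      constructor
      · show ε * ξ t.1 * (ε * ξ t.2.1) = ε * (ε * ξ t.2.2)
        rw [← this]; ring
      · show ε * (ε * ξ t.2.2) = ε * (ε * ξ t.2.2); ring
  · rintro ⟨η, η'', _, _, h1, hadd, hmul⟩
    refine ⟨fun i => η i / ε, ?_, ?_, ?_⟩
    · intro i hi; show η i / ε = 1; rw [h1 i hi]; field_simp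
    · intro t ht; show η t.1 / ε + η t.2.1 / ε = η t.2.2 / ε
      have := hadd t ht; field_simp; linarith
    · intro t ht
      obtain ⟨hm, he⟩ := hmul t ht
      show η t.1 / ε * (η t.2.1 / ε) = η t.2.2 / ε
      field_simp
      nlinarith [hm, he]
end
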